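/- Let A be a weakly-connected combination matrix, M ≥ 1, and w₁⋆, …, w_S⋆ ∈ ℝ^M. Define 𝒲⋆, 𝒲• and 𝒲_∞ = [𝒲⋆; 𝒲•] as follows: 𝒲⋆ ∈ ℝ^{N_gS·M} stacks the blocks 1_{N_s} ⊗ w_s⋆, and 𝒲• := (W ⊗ I_M)ᵀ 𝒲⋆. If x ∈ ℝ^{N·M} satisfies x = (A ⊗ I_M)ᵀ x and the top N_gS·M entries of x coincide with 𝒲⋆, then x = 𝒲_∞. In other words, the solution of the linear system x = (A ⊗ I_M)ᵀ x with prescribed top block 𝒲⋆ is unique and equal to 𝒲_∞. -/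

import Mathlib

open Matrix Filter

noncomputable section

/-- The set of agents of a network made of `S + R` sub-networks of sizes `Nsz b`:
an agent is a pair of a sub-network index and an index within that sub-network. -/
abbrev Agent (S R : ℕ) (Nsz : Fin (S + R) → ℕ) := (b : Fin (S + R)) × Fin (Nsz b)

/-- The `b`-th diagonal block of a combination matrix. -/
def diagBlock {S R : ℕ} {Nsz : Fin (S + R) → ℕ}
    (A : Matrix (Agent S R Nsz) (Agent S R Nsz) ℝ) (b : Fin (S + R)) :
    Matrix (Fin (Nsz b)) (Fin (Nsz b)) ℝ :=
  Matrix.of fun i j => A ⟨b, i⟩ ⟨b, j⟩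

/-- Agents belonging to the sending group `S` (the first `S` sub-networks). -/
abbrev SIdx (S R : ℕ) (Nsz : Fin (S + R) → ℕ) := {x : Agent S R Nsz // x.1.val < S}

/-- Agents belonging to the receiving group `R` (the last `R` sub-networks). -/
abbrev RIdx (S R : ℕ) (Nsz : Fin (S + R) → ℕ) := {x : Agent S R Nsz // S ≤ x.1.val}

/-- The block `T_SR` of a combination matrix (weights from `S`-agents to `R`-agents). -/
def TSR {S R : ℕ} {Nsz : Fin (S + R) → ℕ}
    (A : Matrix (Agent S R Nsz) (Agent S R Nsz) ℝ) :
    Matrix (SIdx S R Nsz) (RIdx S R Nsz) ℝ :=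
  Matrix.of fun x y => A x.1 y.1

/-- The block `T_RR` of a combination matrix (weights internal to the `R`-group). -/
def TRR {S R : ℕ} {Nsz : Fin (S + R) → ℕ}
    (A : Matrix (Agent S R Nsz) (Agent S R Nsz) ℝ) :
    Matrix (RIdx S R Nsz) (RIdx S R Nsz) ℝ :=
  Matrix.of fun x y => A x.1 y.1

/-- The matrix `W = T_SR (I - T_RR)⁻¹`. -/
def Wmat {S R : ℕ} {Nsz : Fin (S + R) → ℕ}
    (A : Matrix (Agent S R Nsz) (Agent S R Nsz) ℝ) :
    Matrix (SIdx S R Nsz) (RIdx S R Nsz) ℝ :=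
  TSR A * (1 - TRR A)⁻¹

/-- A "weakly-connected combination matrix": a left-stochastic nonnegative matrix, block
upper-triangular, whose first `S` diagonal blocks are primitive (some power is entrywise
positive) and whose last `R` diagonal blocks are irreducible with all column sums at most
one and at least one column sum strictly less than one (the column-sum conditions on the
`R`-blocks follow from left-stochasticity except for the strict one, which is stated). -/
structure IsWeaklyConnected {S R : ℕ} {Nsz : Fin (S + R) → ℕ}
    (A : Matrix (Agent S R Nsz) (Agent S R Nsz) ℝ) : Prop where
  S_pos : 1 ≤ S
  R_pos : 1 ≤ R
  Nsz_pos : ∀ b, 1 ≤ Nsz b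
  nonneg : ∀ x y, 0 ≤ A x y
  colsum : ∀ y, ∑ x, A x y = 1
  SS_blockdiag : ∀ x y : Agent S R Nsz, y.1.val < S → x.1 ≠ y.1 → A x y = 0
  blockUpper : ∀ x y : Agent S R Nsz, y.1.val < x.1.val → A x y = 0
  primitive : ∀ b : Fin (S + R), b.val < S →
    ∃ m : ℕ, 1 ≤ m ∧ ∀ i j, 0 < ((diagBlock A b) ^ m) i j
  irreducible : ∀ b : Fin (S + R), S ≤ b.val →
    ∀ i j, ∃ m : ℕ, 1 ≤ m ∧ 0 < ((diagBlock A b) ^ m) i j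
  colsum_lt : ∀ b : Fin (S + R), S ≤ b.val → ∃ j, ∑ i, diagBlock A b i j < 1

/-- `p` is the family of Perron eigenvectors of the first `S` diagonal blocks. -/
def IsPerronFamily {S R : ℕ} {Nsz : Fin (S + R) → ℕ}
    (A : Matrix (Agent S R Nsz) (Agent S R Nsz) ℝ)
    (p : (b : Fin (S + R)) → Fin (Nsz b) → ℝ) : Prop :=
  ∀ b : Fin (S + R), b.val < S →
    (∀ i, 0 < p b i) ∧ (∑ i, p b i = 1) ∧ (diagBlock A b).mulVec (p b) = p b

end

/-!
Fix a coordinate `m` of the second Kronecker factor. On the receiving agents the fixed-point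
equation reads `x_R = T_SRᵀ x_S + T_RRᵀ x_R`, i.e. `(I - T_RR)ᵀ x_R = T_SRᵀ x_S`, so
`x_R = Wᵀ x_S` once `I - T_RR` is invertible. If `T_RR v = v`, then `|v| ≤ T_RR |v|`, and as the
column sums of `T_RR` are at most one this forces `T_RR |v| = |v|`. Since `T_RR` is block upper
triangular, going through the blocks from the last one, `|v|` restricted to each block is a
nonnegative fixed vector of the diagonal block; the mass lost at a column with sum `< 1` makes
one entry vanish, and irreducibility spreads that zero over the whole block. Hence `v = 0`.
-/

open Function Finset
open scoped Kronecker

theorem sum_comp_le_sum_of_injective {ι κ M : Type*} [Fintype ι] [Fintype κ]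
    [AddCommMonoid M] [PartialOrder M] [IsOrderedAddMonoid M] {e : ι → κ}
    (he : Injective e) {f : κ → M} (hf : ∀ j, 0 ≤ f j) : ∑ i, f (e i) ≤ ∑ j, f j :=
  (Finset.sum_map univ ⟨e, he⟩ f).symm.trans_le (Finset.sum_le_univ_sum_of_nonneg hf)

namespace Matrix

variable {n 𝕜 : Type*} [Fintype n] [CommRing 𝕜] {B : Matrix n n 𝕜} {u : n → 𝕜}

theorem sum_mulVec_eq_sum_colSum_mul (B : Matrix n n 𝕜) (u : n → 𝕜) :
    ∑ i, (B *ᵥ u) i = ∑ j, (∑ i, B i j) * u j := by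
  simp only [mulVec, dotProduct, Finset.sum_mul]
  exact Finset.sum_comm

theorem pow_mulVec_eq_self [DecidableEq n] (hfix : B *ᵥ u = u) (k : ℕ) : (B ^ k) *ᵥ u = u := by
  induction k with
  | zero => exact one_mulVec u
  | succ k ih => rw [pow_succ, ← mulVec_mulVec, hfix, ih]

variable [LinearOrder 𝕜] [IsStrictOrderedRing 𝕜]

theorem abs_mulVec_apply_le (hB : ∀ i j, 0 ≤ B i j) (v : n → 𝕜) (i : n) :
    |(B *ᵥ v) i| ≤ (B *ᵥ fun j => |v j|) i :=
  (Finset.abs_sum_le_sum_abs _ _).trans_eq <|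
    Finset.sum_congr rfl fun j _ => by rw [abs_mul, abs_of_nonneg (hB i j)]

theorem mulVec_eq_self_of_le_mulVec (hcol : ∀ j, ∑ i, B i j ≤ 1) (hu : 0 ≤ u)
    (hle : u ≤ B *ᵥ u) : B *ᵥ u = u := by
  have hle' : ∀ i ∈ univ, u i ≤ (B *ᵥ u) i := fun i _ => hle i
  have hsum : ∑ i, (B *ᵥ u) i ≤ ∑ i, u i := by
    rw [sum_mulVec_eq_sum_colSum_mul]
    exact Finset.sum_le_sum fun j _ => mul_le_of_le_one_left (hu j) (hcol j)
  have hpt := (Finset.sum_eq_sum_iff_of_le hle').mp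
    (le_antisymm (Finset.sum_le_sum hle') hsum)
  exact funext fun i => (hpt i (mem_univ i)).symm

theorem apply_eq_zero_of_pow_apply_pos [DecidableEq n] (hB : ∀ i j, 0 ≤ B i j) (hu : 0 ≤ u)
    (hfix : B *ᵥ u = u) {i j : n} {k : ℕ} (hi : u i = 0) (hk : 0 < (B ^ k) i j) : u j = 0 := by
  have hterms : ∑ l, (B ^ k) i l * u l = 0 := by
    rw [← hi, ← congrFun (pow_mulVec_eq_self hfix k) i]
    rfl
  have hj := (Finset.sum_eq_zero_iff_of_nonneg fun l _ =>
    mul_nonneg (pow_apply_nonneg hB k i l) (hu l)).mp hterms j (mem_univ j)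
  exact (mul_eq_zero.mp hj).resolve_left hk.ne'

theorem IsIrreducible.eq_zero_of_mulVec_eq_self [DecidableEq n] (hB : B.IsIrreducible)
    (hcol : ∀ j, ∑ i, B i j ≤ 1) (hlt : ∃ j, ∑ i, B i j < 1) (hu : 0 ≤ u)
    (hfix : B *ᵥ u = u) : u = 0 := by
  obtain ⟨j₀, hj₀⟩ := hlt
  have hle : ∀ j ∈ univ, (∑ i, B i j) * u j ≤ u j := fun j _ =>
    mul_le_of_le_one_left (hu j) (hcol j)
  have hcol_mul : (∑ i, B i j₀) * u j₀ = u j₀ := by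
    refine (Finset.sum_eq_sum_iff_of_le hle).mp ?_ j₀ (mem_univ j₀)
    rw [← sum_mulVec_eq_sum_colSum_mul, hfix]
  have hu₀ : u j₀ = 0 := by
    have : (1 - ∑ i, B i j₀) * u j₀ = 0 := by linarith
    exact (mul_eq_zero.mp this).resolve_left (by linarith)
  funext j
  obtain ⟨k, -, hk⟩ := (isIrreducible_iff_exists_pow_pos hB.nonneg).mp hB j₀ j
  exact apply_eq_zero_of_pow_apply_pos hB.nonneg hu hfix hu₀ hk

theorem kronecker_one_transpose_mulVec_apply {l m k α : Type*} [Fintype l] [Fintype k]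
    [DecidableEq k] [CommSemiring α] (C : Matrix l m α) (x : l × k → α) (i : m) (c : k) :
    ((C ⊗ₖ (1 : Matrix k k α))ᵀ *ᵥ x) (i, c) = (Cᵀ *ᵥ fun j => x (j, c)) i := by
  simp [mulVec, dotProduct, Fintype.sum_prod_type, kroneckerMap_apply, one_apply]

end Matrix

theorem transpose_mulVec_apply_rIdx {S R : ℕ} {Nsz : Fin (S + R) → ℕ}
    (A : Matrix (Agent S R Nsz) (Agent S R Nsz) ℝ) (v : Agent S R Nsz → ℝ) (r : RIdx S R Nsz) :
    (Aᵀ *ᵥ v) r.1 = ((TSR A)ᵀ *ᵥ fun s => v s.1) r + ((TRR A)ᵀ *ᵥ fun c => v c.1) r := by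
  simp only [mulVec, dotProduct, transpose_apply, TSR, TRR, of_apply]
  rw [← Fintype.sum_subtype_add_sum_subtype (fun y : Agent S R Nsz => y.1.val < S)]
  congr 1
  exact Fintype.sum_equiv (Equiv.subtypeEquivRight fun _ => not_lt) _ _ fun _ => rfl

namespace IsWeaklyConnected

variable {S R : ℕ} {Nsz : Fin (S + R) → ℕ} {A : Matrix (Agent S R Nsz) (Agent S R Nsz) ℝ}

theorem sum_comp_le_one (hA : IsWeaklyConnected A) {ι : Type*} [Fintype ι]
    {e : ι → Agent S R Nsz} (he : Injective e) (y : Agent S R Nsz) : ∑ i, A (e i) y ≤ 1 :=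
  (sum_comp_le_sum_of_injective he fun x => hA.nonneg x y).trans_eq (hA.colsum y)

theorem isIrreducible_diagBlock (hA : IsWeaklyConnected A) {b : Fin (S + R)} (hb : S ≤ b.val) :
    (diagBlock A b).IsIrreducible :=
  (isIrreducible_iff_exists_pow_pos fun _ _ => hA.nonneg _ _).mpr fun i j =>
    let ⟨m, hm, hpos⟩ := hA.irreducible b hb i j
    ⟨m, hm, hpos⟩

theorem diagBlock_mulVec_eq_self (hA : IsWeaklyConnected A) {u : RIdx S R Nsz → ℝ}
    (hfix : TRR A *ᵥ u = u) {b : Fin (S + R)} (hb : S ≤ b.val)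
    (hlater : ∀ c : RIdx S R Nsz, b < c.1.1 → u c = 0) :
    diagBlock A b *ᵥ (fun j => u ⟨⟨b, j⟩, hb⟩) = fun j => u ⟨⟨b, j⟩, hb⟩ := by
  funext i
  rw [← congrFun hfix ⟨⟨b, i⟩, hb⟩]
  refine Fintype.sum_of_injective (fun j => (⟨⟨b, j⟩, hb⟩ : RIdx S R Nsz)) ?_ _ _ ?_ fun _ => rfl
  · intro j j' h
    simpa using h
  · rintro ⟨⟨c, j⟩, hc⟩ hrange
    rcases lt_trichotomy c b with hcb | rfl | hbc
    · simp [TRR, hA.blockUpper ⟨b, i⟩ ⟨c, j⟩ hcb]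
    · exact absurd ⟨j, rfl⟩ hrange
    · simp [hlater ⟨⟨c, j⟩, hc⟩ hbc]

theorem eq_zero_of_TRR_mulVec_eq_self_of_nonneg (hA : IsWeaklyConnected A)
    {u : RIdx S R Nsz → ℝ} (hu : 0 ≤ u) (hfix : TRR A *ᵥ u = u) : u = 0 := by
  suffices h : ∀ b : Fin (S + R), ∀ c : RIdx S R Nsz, c.1.1 = b → u c = 0 from
    funext fun c => h _ c rfl
  intro b
  induction b using WellFoundedGT.induction with
  | ind b ih =>
    rintro ⟨⟨_, j⟩, hb⟩ rfl
    have hblock := (hA.isIrreducible_diagBlock hb).eq_zero_of_mulVec_eq_self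
      (fun _ => hA.sum_comp_le_one sigma_mk_injective _) (hA.colsum_lt _ hb)
      (fun _ => hu _) (hA.diagBlock_mulVec_eq_self hfix hb fun c hc => ih _ hc c rfl)
    exact congrFun hblock j

theorem eq_zero_of_TRR_mulVec_eq_self (hA : IsWeaklyConnected A) {v : RIdx S R Nsz → ℝ}
    (hfix : TRR A *ᵥ v = v) : v = 0 := by
  have hTRR : ∀ r c, 0 ≤ TRR A r c := fun _ _ => hA.nonneg _ _
  have habs : TRR A *ᵥ (fun r => |v r|) = fun r => |v r| :=
    mulVec_eq_self_of_le_mulVec (fun c => hA.sum_comp_le_one Subtype.val_injective _)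
      (fun r => abs_nonneg _)
      (fun r => (congrArg abs (congrFun hfix r)).symm.le.trans (abs_mulVec_apply_le hTRR v r))
  funext r
  exact abs_eq_zero.mp (congrFun (hA.eq_zero_of_TRR_mulVec_eq_self_of_nonneg
    (fun r => abs_nonneg _) habs) r)

theorem isUnit_det_one_sub_TRR (hA : IsWeaklyConnected A) : IsUnit (1 - TRR A).det := by
  refine isUnit_iff_ne_zero.mpr fun hdet => ?_
  obtain ⟨v, hv, hker⟩ := exists_mulVec_eq_zero_iff.mpr hdet
  rw [sub_mulVec, one_mulVec, sub_eq_zero] at hker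
  exact hv (hA.eq_zero_of_TRR_mulVec_eq_self hker.symm)

theorem rIdx_eq_Wmat_transpose_mulVec (hA : IsWeaklyConnected A) {v : Agent S R Nsz → ℝ}
    (hfix : Aᵀ *ᵥ v = v) :
    (fun r : RIdx S R Nsz => v r.1) = (Wmat A)ᵀ *ᵥ fun s : SIdx S R Nsz => v s.1 := by
  have hbottom : (1 - TRR A)ᵀ *ᵥ (fun r : RIdx S R Nsz => v r.1)
      = (TSR A)ᵀ *ᵥ fun s : SIdx S R Nsz => v s.1 := by
    rw [transpose_sub, transpose_one, sub_mulVec, one_mulVec, sub_eq_iff_eq_add]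
    funext r
    rw [Pi.add_apply, ← transpose_mulVec_apply_rIdx, hfix]
  rw [Wmat, transpose_mul, ← mulVec_mulVec, ← hbottom, mulVec_mulVec, ← transpose_mul,
    mul_nonsing_inv _ hA.isUnit_det_one_sub_TRR, transpose_one, one_mulVec]

end IsWeaklyConnected

open Kronecker in
theorem fixed_point_unique_general
    (S R : ℕ) (Nsz : Fin (S + R) → ℕ)
    (A : Matrix (Agent S R Nsz) (Agent S R Nsz) ℝ)
    (hA : IsWeaklyConnected A)
    (M : ℕ)
    (wstar : Fin (S + R) → Fin M → ℝ)
    (Wst : SIdx S R Nsz × Fin M → ℝ)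
    (hWst : ∀ q, Wst q = wstar q.1.val.1 q.2)
    (Wbul : RIdx S R Nsz × Fin M → ℝ)
    (hWbul : Wbul = ((Wmat A ⊗ₖ (1 : Matrix (Fin M) (Fin M) ℝ)).transpose).mulVec Wst)
    (x : Agent S R Nsz × Fin M → ℝ)
    (hfix : ((A ⊗ₖ (1 : Matrix (Fin M) (Fin M) ℝ)).transpose).mulVec x = x)
    (htop : ∀ (z : Agent S R Nsz) (h : z.1.val < S) (m : Fin M), x (z, m) = wstar z.1 m) :
    ∀ q : Agent S R Nsz × Fin M, x q =
      if h : q.1.1.val < S then wstar q.1.1 q.2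
      else Wbul (⟨q.1, not_lt.mp h⟩, q.2) := by
  rintro ⟨z, m⟩
  split_ifs with hz
  · exact htop z hz m
  have hslice : Aᵀ *ᵥ (fun y => x (y, m)) = fun y => x (y, m) :=
    funext fun y => by rw [← kronecker_one_transpose_mulVec_apply, hfix]
  have htop_slice : (fun s : SIdx S R Nsz => x (s.1, m)) = fun s => Wst (s, m) :=
    funext fun s => by rw [hWst, htop s.1 s.2]
  rw [hWbul, kronecker_one_transpose_mulVec_apply, ← htop_slice,
    ← hA.rIdx_eq_Wmat_transpose_mulVec hslice]

open Kronecker in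
/-- **Uniqueness of the fixed point with prescribed top block.**
Let `A` be a weakly-connected combination matrix, `M ≥ 1`, and `w₁⋆, …, w_S⋆ ∈ ℝ^M`.
Let `𝒲⋆` stack the blocks `1_{N_s} ⊗ w_s⋆`, let `𝒲• := (W ⊗ I_M)ᵀ 𝒲⋆` and
`𝒲_∞ = [𝒲⋆; 𝒲•]`.  If `x` satisfies `x = (A ⊗ I_M)ᵀ x` and the top `N_gS·M` entries of
`x` coincide with `𝒲⋆`, then `x = 𝒲_∞`. -/
theorem fixed_point_unique
    (S R : ℕ) (Nsz : Fin (S + R) → ℕ)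
    (A : Matrix (Agent S R Nsz) (Agent S R Nsz) ℝ)
    (hA : IsWeaklyConnected A)
    (M : ℕ) (hM : 1 ≤ M)
    (wstar : Fin (S + R) → Fin M → ℝ)
    (Wst : SIdx S R Nsz × Fin M → ℝ)
    (hWst : ∀ q, Wst q = wstar q.1.val.1 q.2)
    (Wbul : RIdx S R Nsz × Fin M → ℝ)
    (hWbul : Wbul = ((Wmat A ⊗ₖ (1 : Matrix (Fin M) (Fin M) ℝ)).transpose).mulVec Wst)
    (x : Agent S R Nsz × Fin M → ℝ)
    (hfix : ((A ⊗ₖ (1 : Matrix (Fin M) (Fin M) ℝ)).transpose).mulVec x = x)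
    (htop : ∀ (z : Agent S R Nsz) (h : z.1.val < S) (m : Fin M), x (z, m) = wstar z.1 m) :
    ∀ q : Agent S R Nsz × Fin M, x q =
      if h : q.1.1.val < S then wstar q.1.1 q.2
      else Wbul (⟨q.1, not_lt.mp h⟩, q.2) :=
  fixed_point_unique_general S R Nsz A hA M wstar Wst hWst Wbul hWbul x hfix htop
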